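/- Let K be a field and let a ≤ b be real numbers. Then the standard interleaving distance (valued in ℝ≥0∞) between the interval persistence module M_{[a,b)} : ℝ ⥤ Vec_K and the zero persistence module equals ENNReal.ofReal((b − a)/2). -/

import Mathlib

open CategoryTheory
open scoped ENNReal

section SegmentModule

open Classical in
/-- The value at `p` of the "indicator" persistence module of a subset `S` of a preorder `P`:
the line `K` if `p ∈ S` and the zero space otherwise. -/
noncomputable def segObj (K : Type) [Field K] {P : Type} [Preorder P] (S : Set P) (p : P) :
    ModuleCat K :=
  if p ∈ S then ModuleCat.of K K else ModuleCat.of K PUnit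

open Classical in
/-- The structure maps of the indicator persistence module of `S`: the identity of `K` whenever
possible, and the zero map otherwise. -/
noncomputable def segMap (K : Type) [Field K] {P : Type} [Preorder P] (S : Set P) (r s : P) :
    segObj K S r ⟶ segObj K S s :=
  if h : r ∈ S ∧ s ∈ S then eqToHom (by unfold segObj; rw [if_pos h.1, if_pos h.2]) else 0

/-- The indicator persistence module of an order-convex subset `S` of a preorder `P`. -/
noncomputable def segmentModule (K : Type) [Field K] {P : Type} [Preorder P] (S : Set P)
    (hS : ∀ {r s t : P}, r ≤ s → s ≤ t → r ∈ S → t ∈ S → s ∈ S) : P ⥤ ModuleCat K where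
  obj p := segObj K S p
  map {r s} _ := segMap K S r s
  map_id p := by
    show segMap K S p p = 𝟙 (segObj K S p)
    unfold segMap
    by_cases hp : p ∈ S
    · rw [dif_pos ⟨hp, hp⟩]
      exact eqToHom_refl (segObj K S p) _
    · haveI : Subsingleton (segObj K S p) := by
        unfold segObj
        rw [if_neg hp]
        exact inferInstanceAs (Subsingleton PUnit)
      exact ModuleCat.hom_ext (LinearMap.ext fun x => Subsingleton.elim _ _)
  map_comp {r s t} f g := by
    show segMap K S r t = segMap K S r s ≫ segMap K S s t
    unfold segMap
    by_cases hrt : r ∈ S ∧ t ∈ S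
    · have hs : s ∈ S := hS (leOfHom f) (leOfHom g) hrt.1 hrt.2
      rw [dif_pos hrt, dif_pos ⟨hrt.1, hs⟩, dif_pos ⟨hs, hrt.2⟩, eqToHom_trans]
    · by_cases hr : r ∈ S
      · have ht : t ∉ S := fun h => hrt ⟨hr, h⟩
        rw [dif_neg hrt, dif_neg (fun h : s ∈ S ∧ t ∈ S => ht h.2)]
        exact (Limits.comp_zero).symm
      · rw [dif_neg hrt, dif_neg (fun h : r ∈ S ∧ s ∈ S => hr h.1)]
        exact (Limits.zero_comp).symm

/-- The interval persistence module `M_{[a,b)} : ℝ ⥤ Vec_K`: it is `K` on `[a, b)` and `0`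
elsewhere, with structure maps the identity of `K` whenever possible and `0` otherwise. -/
noncomputable def intervalModule (K : Type) [Field K] (a b : ℝ) : ℝ ⥤ ModuleCat K :=
  segmentModule K {r : ℝ | a ≤ r ∧ r < b}
    (fun hrs hst hr ht => ⟨le_trans hr.1 hrs, lt_of_le_of_lt hst ht.2⟩)

/-- The zero persistence module `ℝ ⥤ Vec_K`. -/
noncomputable def zeroModule (K : Type) [Field K] : ℝ ⥤ ModuleCat K :=
  (Functor.const ℝ).obj (ModuleCat.of K PUnit)

end SegmentModule

section Interleaving

variable {C : Type*} [Category C]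

/-- A `t`-interleaving (`t ≥ 0`) between generalized persistence modules `M N : ℝ ⥤ C`:
families of morphisms `φ_s : M s ⟶ N (s + t)` and `ψ_s : N s ⟶ M (s + t)` commuting with the
structure maps, whose composites are the structure maps `M (s ≤ s + 2t)`, `N (s ≤ s + 2t)`. -/
def IsInterleaving (M N : ℝ ⥤ C) (t : ℝ) (_ht : 0 ≤ t) : Prop :=
  ∃ (φ : ∀ s : ℝ, M.obj s ⟶ N.obj (s + t)) (ψ : ∀ s : ℝ, N.obj s ⟶ M.obj (s + t)),
    (∀ (r s : ℝ) (h : r ≤ s),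
      φ r ≫ N.map (homOfLE (by linarith : r + t ≤ s + t)) = M.map (homOfLE h) ≫ φ s) ∧
    (∀ (r s : ℝ) (h : r ≤ s),
      ψ r ≫ M.map (homOfLE (by linarith : r + t ≤ s + t)) = N.map (homOfLE h) ≫ ψ s) ∧
    (∀ s : ℝ, φ s ≫ ψ (s + t) = M.map (homOfLE (by linarith : s ≤ s + t + t))) ∧
    (∀ s : ℝ, ψ s ≫ φ (s + t) = N.map (homOfLE (by linarith : s ≤ s + t + t)))

/-- The standard interleaving distance between generalized persistence modules `ℝ ⥤ C`. -/
noncomputable def interleavingDist (M N : ℝ ⥤ C) : ℝ≥0∞ :=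
  sInf {e | ∃ (t : ℝ) (ht : 0 ≤ t), IsInterleaving M N t ht ∧ e = ENNReal.ofReal t}

end Interleaving

lemma aux_interleaving (K : Type) [Field K] (a b t : ℝ) (ht0 : 0 ≤ t) (ht : b - a ≤ 2 * t) :
    IsInterleaving (intervalModule K a b) (zeroModule K) t ht0 := by
  refine ⟨fun s => 0, fun s => 0, ?_, ?_, ?_, ?_⟩
  · intro r s h; rw [Limits.zero_comp, Limits.comp_zero]
  · intro r s h; rw [Limits.zero_comp, Limits.comp_zero]
  · intro s
    rw [Limits.zero_comp]
    symm
    show segMap K {r : ℝ | a ≤ r ∧ r < b} s (s + t + t) = 0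
    unfold segMap
    rw [dif_neg]
    rintro ⟨⟨h1, h2⟩, ⟨h3, h4⟩⟩
    linarith
  · intro s
    haveI : Subsingleton ((zeroModule K).obj (s + t + t)) :=
      inferInstanceAs (Subsingleton PUnit)
    exact ModuleCat.hom_ext (LinearMap.ext fun x => Subsingleton.elim _ _)

lemma aux_lower (K : Type) [Field K] (a b t : ℝ) (ht0 : 0 ≤ t)
    (hint : IsInterleaving (intervalModule K a b) (zeroModule K) t ht0) :
    (b - a) / 2 ≤ t := by
  by_contra h
  push_neg at h
  obtain ⟨φ, ψ, _, _, hcomp, _⟩ := hint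
  have hb : a < b := by linarith
  set S : Set ℝ := {r : ℝ | a ≤ r ∧ r < b} with hSdef
  have ha : a ∈ S := ⟨le_refl a, hb⟩
  have ha2 : a + t + t ∈ S := ⟨by linarith, by linarith⟩
  have hφ0 : φ a = 0 := by
    haveI : Subsingleton ((zeroModule K).obj (a + t)) :=
      inferInstanceAs (Subsingleton PUnit)
    exact ModuleCat.hom_ext (LinearMap.ext fun x => Subsingleton.elim _ _)
  have h0 := hcomp a
  rw [hφ0, Limits.zero_comp] at h0
  have h1 : segMap K S a (a + t + t) = 0 := h0.symm
  have e : segObj K S a = segObj K S (a + t + t) := by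
    unfold segObj; rw [if_pos ha, if_pos ha2]
  rw [segMap, dif_pos ⟨ha, ha2⟩] at h1
  have hid : 𝟙 (segObj K S a) = 0 := by
    calc 𝟙 (segObj K S a) = eqToHom e ≫ eqToHom e.symm := by
          rw [eqToHom_trans, eqToHom_refl]
      _ = 0 ≫ eqToHom e.symm := by rw [← h1]
      _ = 0 := Limits.zero_comp
  have hsub : ∀ x : (segObj K S a), x = 0 := by
    intro x
    have hx := congrArg (fun f => f.hom x) hid
    simpa using hx
  have e2 : segObj K S a = ModuleCat.of K K := by
    unfold segObj; rw [if_pos ha]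
  rw [e2] at hsub
  have hK : ∀ x : K, x = 0 := hsub
  exact one_ne_zero (hK 1)

/-- The standard interleaving distance between the interval module
`M_{[a,b)}` and the zero persistence module is `(b - a) / 2`. -/
theorem stmt_12 (K : Type) [Field K] (a b : ℝ) (hab : a ≤ b) :
    interleavingDist (intervalModule K a b) (zeroModule K) =
      ENNReal.ofReal ((b - a) / 2) := by
  unfold interleavingDist
  apply le_antisymm
  · apply sInf_le
    have h0 : (0 : ℝ) ≤ (b - a) / 2 := by linarith
    exact ⟨(b - a) / 2, h0, aux_interleaving K a b _ h0 (by linarith), rfl⟩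
  · apply le_sInf
    rintro e ⟨t, ht0, hint, rfl⟩
    exact ENNReal.ofReal_le_ofReal (aux_lower K a b t ht0 hint)
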